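/- In the oruga graph of size n with the standard framing, the map sending an arc α starting at integer i and ending at integer j > i (going above or below each integer strictly between them) to the brick s̄_α with left corner at vertex i, right corner at vertex j−1, and path using the top edge between k−1 and k iff α passes above k, is a bijection between arcs on [n] and bricks of the oruga graph; moreover two arcs form a noncrossing arc diagram (they do not cross and share no left or right endpoint) if and only if the corresponding bricks are coherent. -/

import Mathlib

open List
open scoped Classical

/-- A framed graph: a flow graph (DAG on vertices `0, …, V-1` with edges directed from
smaller to larger vertices) together with a framing, i.e. total orders on the incoming and
outgoing edges at each vertex, encoded by injective rational keys. -/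
structure FramedGraph where
  V : ℕ
  E : Type
  [fintypeE : Fintype E]
  [decEqE : DecidableEq E]
  src : E → ℕ
  tgt : E → ℕ
  src_lt_tgt : ∀ e, src e < tgt e
  tgt_lt_V : ∀ e, tgt e < V
  inOrd : E → ℚ
  outOrd : E → ℚ
  inOrd_inj : ∀ e e', tgt e = tgt e' → inOrd e = inOrd e' → e = e'
  outOrd_inj : ∀ e e', src e = src e' → outOrd e = outOrd e' → e = e'

attribute [instance] FramedGraph.fintypeE FramedGraph.decEqE

namespace FramedGraph

section Defs

variable (Γ : FramedGraph)

def IsSource (v : ℕ) : Prop := v < Γ.V ∧ ∀ e, Γ.tgt e ≠ v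

def IsSink (v : ℕ) : Prop := v < Γ.V ∧ ∀ e, Γ.src e ≠ v

def IsInternal (v : ℕ) : Prop := (∃ e, Γ.tgt e = v) ∧ (∃ e, Γ.src e = v)

noncomputable def sources : Finset ℕ := (Finset.range Γ.V).filter fun v => ∀ e, Γ.tgt e ≠ v

noncomputable def sinks : Finset ℕ := (Finset.range Γ.V).filter fun v => ∀ e, Γ.src e ≠ v

/-- A (directed) path: consecutive edges compose. -/
def IsPath (p : List Γ.E) : Prop := p.Chain' fun e f => Γ.tgt e = Γ.src f

/-- A route: a nonempty path from a source to a sink. -/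
def IsRoute (p : List Γ.E) : Prop :=
  p ≠ [] ∧ Γ.IsPath p ∧ (∀ e, p.head? = some e → Γ.IsSource (Γ.src e)) ∧
    ∀ e, p.getLast? = some e → Γ.IsSink (Γ.tgt e)

/-- A left corner: an internal vertex together with two incoming edges that are
consecutive in the framing. -/
structure LeftCorner where
  v : ℕ
  lo : Γ.E
  hi : Γ.E
  tgt_lo : Γ.tgt lo = v
  tgt_hi : Γ.tgt hi = v
  lo_lt_hi : Γ.inOrd lo < Γ.inOrd hi
  consec : ∀ e, Γ.tgt e = v → ¬(Γ.inOrd lo < Γ.inOrd e ∧ Γ.inOrd e < Γ.inOrd hi)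
  internal : ∃ e, Γ.src e = v

/-- A right corner: an internal vertex together with two outgoing edges that are
consecutive in the framing. -/
structure RightCorner where
  v : ℕ
  lo : Γ.E
  hi : Γ.E
  src_lo : Γ.src lo = v
  src_hi : Γ.src hi = v
  lo_lt_hi : Γ.outOrd lo < Γ.outOrd hi
  consec : ∀ e, Γ.src e = v → ¬(Γ.outOrd lo < Γ.outOrd e ∧ Γ.outOrd e < Γ.outOrd hi)
  internal : ∃ e, Γ.tgt e = v

/-- The key of a left corner: inserted strictly between its two defining edges in the
extended incoming framing order. -/
def LeftCorner.key (c : Γ.LeftCorner) : ℚ := (Γ.inOrd c.lo + Γ.inOrd c.hi) / 2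

def RightCorner.key (c : Γ.RightCorner) : ℚ := (Γ.outOrd c.lo + Γ.outOrd c.hi) / 2

/-- The data of a generalized path/route: an optional left corner, an optional right
corner and a list of edges. -/
structure GRoute where
  lc : Option Γ.LeftCorner
  rc : Option Γ.RightCorner
  path : List Γ.E

end Defs

section GDefs

variable {Γ : FramedGraph}

/-- A plain route viewed as a generalized route. -/
def routeG (p : List Γ.E) : Γ.GRoute := ⟨none, none, p⟩

/-- `g` is a generalized route: its path is a path, starting at a source or at its left
corner, and ending at a sink or at its right corner. -/
def IsGRoute (g : Γ.GRoute) : Prop :=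
  Γ.IsPath g.path ∧
  (∀ e, g.path.head? = some e →
    (match g.lc with
     | some c => Γ.src e = c.v
     | none => Γ.IsSource (Γ.src e))) ∧
  (∀ e, g.path.getLast? = some e →
    (match g.rc with
     | some c => Γ.tgt e = c.v
     | none => Γ.IsSink (Γ.tgt e))) ∧
  (g.path = [] → ∃ cl cr, g.lc = some cl ∧ g.rc = some cr ∧ cl.v = cr.v)

/-- A brick: a generalized route from a left corner to a right corner. -/
def IsBrick (g : Γ.GRoute) : Prop := IsGRoute g ∧ g.lc.isSome ∧ g.rc.isSome

/-- A left-cornered route with left corner `c`. -/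
def IsLCRouteAt (c : Γ.LeftCorner) (g : Γ.GRoute) : Prop :=
  IsGRoute g ∧ g.lc = some c ∧ g.rc = none

/-- Key list of the reversed prefix of `g` before `v` (used for the incoming preorder at
`v`, by lexicographic comparison). -/
def GRoute.inKeys (g : Γ.GRoute) (v : ℕ) : List ℚ :=
  ((g.path.filter fun e => Γ.tgt e ≤ v).reverse.map Γ.inOrd) ++
    g.lc.elim [] fun c => [c.key]

/-- Key list of the suffix of `g` after `v` (used for the outgoing preorder at `v`). -/
def GRoute.outKeys (g : Γ.GRoute) (v : ℕ) : List ℚ :=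
  ((g.path.filter fun e => v ≤ Γ.src e).map Γ.outOrd) ++
    g.rc.elim [] fun c => [c.key]

/-- `g` passes through the vertex `v`. -/
def GRoute.passes (g : Γ.GRoute) (v : ℕ) : Prop :=
  (∃ e ∈ g.path, Γ.src e = v ∨ Γ.tgt e = v) ∨ (∃ c, g.lc = some c ∧ c.v = v) ∨
    (∃ c, g.rc = some c ∧ c.v = v)

/-- Strict lexicographic comparison of key lists. -/
def lexLt (a b : List ℚ) : Prop := List.Lex (· < ·) a b

def lexLe (a b : List ℚ) : Prop := a = b ∨ lexLt a b

/-- `g` is clockwise to `h` at `v`: both pass through `v`, `g` is strictly smaller in the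
incoming preorder at `v` and strictly larger in the outgoing preorder at `v`. -/
def CwAt (g h : Γ.GRoute) (v : ℕ) : Prop :=
  g.passes v ∧ h.passes v ∧ lexLt (g.inKeys v) (h.inKeys v) ∧
    lexLt (h.outKeys v) (g.outKeys v)

/-- Weak coherence (noncrossing): neither is clockwise to the other at any vertex. -/
def WeakCoherent (g h : Γ.GRoute) : Prop := ∀ v, ¬CwAt g h v ∧ ¬CwAt h g v

/-- Coherence: weakly coherent and not sharing a left corner nor a right corner. -/
def Coherent (g h : Γ.GRoute) : Prop :=
  WeakCoherent g h ∧ (∀ c, g.lc = some c → h.lc ≠ some c) ∧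
    ∀ c, g.rc = some c → h.rc ≠ some c

/-- A clique of routes: a set of pairwise coherent routes. -/
def IsClique (Δ : Set (List Γ.E)) : Prop :=
  (∀ p ∈ Δ, Γ.IsRoute p) ∧ ∀ p ∈ Δ, ∀ q ∈ Δ, p ≠ q → WeakCoherent (routeG p) (routeG q)

def IsMaxClique (Δ : Set (List Γ.E)) : Prop :=
  IsClique Δ ∧ ∀ Δ', IsClique Δ' → Δ ⊆ Δ' → Δ' = Δ

/-- Two adjacent maximal cliques sharing all routes but one, with `r ∈ Δ \ Δ'` and
`r' ∈ Δ' \ Δ`. -/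
def Adjacent (Δ Δ' : Set (List Γ.E)) (r r' : List Γ.E) : Prop :=
  IsMaxClique Δ ∧ IsMaxClique Δ' ∧ r ∈ Δ ∧ r ∉ Δ' ∧ r' ∈ Δ' ∧ r' ∉ Δ ∧
    Δ \ {r} = Δ' \ {r'}

/-- Counterclockwise rotation `Δ → Δ'` (a covering relation of the framing lattice):
the removed route `r` is clockwise to the added route `r'`. -/
def Rotation (Δ Δ' : Set (List Γ.E)) : Prop :=
  ∃ r r', Adjacent Δ Δ' r r' ∧ ∃ v, CwAt (routeG r) (routeG r') v

/-- The order of the framing lattice: the reflexive-transitive closure of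
counterclockwise rotations. -/
def cliqueLe : Set (List Γ.E) → Set (List Γ.E) → Prop := Relation.ReflTransGen Rotation

/-- The upper cornering route of `Δ` at the left corner `c`: the smallest route of `Δ` in
the incoming preorder at `c.v` using the edge `c.hi`. -/
def IsUpperCornering (Δ : Set (List Γ.E)) (c : Γ.LeftCorner) (r : List Γ.E) : Prop :=
  r ∈ Δ ∧ c.hi ∈ r ∧
    ∀ p ∈ Δ, c.hi ∈ p → ¬lexLt ((routeG p).inKeys c.v) ((routeG r).inKeys c.v)

/-- The lower cornering route of `Δ` at the left corner `c`: the largest route of `Δ` in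
the incoming preorder at `c.v` using the edge `c.lo`. -/
def IsLowerCornering (Δ : Set (List Γ.E)) (c : Γ.LeftCorner) (r : List Γ.E) : Prop :=
  r ∈ Δ ∧ c.lo ∈ r ∧
    ∀ p ∈ Δ, c.lo ∈ p → ¬lexLt ((routeG r).inKeys c.v) ((routeG p).inKeys c.v)

noncomputable def upperCornering (Δ : Set (List Γ.E)) (c : Γ.LeftCorner) : List Γ.E :=
  Classical.epsilon (IsUpperCornering Δ c)

/-- The suffix of a path from the vertex `v` on. -/
def suffixFrom (p : List Γ.E) (v : ℕ) : List Γ.E := p.filter fun e => v ≤ Γ.src e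

/-- The left-cornered route of `Δ` at `c`: the corner `c` followed by the common suffix
of the cornering routes of `Δ` at `c`. -/
noncomputable def lcRouteOf (Δ : Set (List Γ.E)) (c : Γ.LeftCorner) : Γ.GRoute :=
  ⟨some c, none, suffixFrom (upperCornering Δ c) c.v⟩

/-- The left cubical coordinate of `Δ` at `c`: the corank of the left-cornered route of
`Δ` at `c` in the outgoing order at `c.v` among all left-cornered routes with corner `c`. -/
noncomputable def CCL (Δ : Set (List Γ.E)) (c : Γ.LeftCorner) : ℕ :=
  Nat.card {g : Γ.GRoute //
    IsLCRouteAt c g ∧ lexLt ((lcRouteOf Δ c).outKeys c.v) (g.outKeys c.v)}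

/-- A brick is left-clockwise to a clique if it is clockwise to one of its routes at the
vertex of its left corner. -/
def LeftCw (b : Γ.GRoute) (Δ : Set (List Γ.E)) : Prop :=
  ∃ c, b.lc = some c ∧ ∃ p ∈ Δ, CwAt b (routeG p) c.v

/-- `s` is the subroute of conflict of `r` and `r'`: a maximal common subpath containing
a vertex at which `r` and `r'` are incoherent. -/
def IsConflictSub (r r' s : List Γ.E) : Prop :=
  ∃ v, (CwAt (routeG r) (routeG r') v ∨ CwAt (routeG r') (routeG r) v) ∧
    s.IsInfix r ∧ s.IsInfix r' ∧ (s = [] ∨ (routeG s).passes v) ∧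
    ∀ t : List Γ.E, t.IsInfix r → t.IsInfix r' → (t = [] ∨ (routeG t).passes v) →
      t.IsInfix s

/-- The brick `b` is the label of the exchange of `r` (clockwise) for `r'`: its path is
the subroute of conflict, its left corner is formed by the last edges of the prefixes and
its right corner by the first edges of the suffixes. -/
def IsLabelData (r r' : List Γ.E) (b : Γ.GRoute) : Prop :=
  IsConflictSub r r' b.path ∧
  ∃ r₁ r₂ r₁' r₂' cl cr, r = r₁ ++ b.path ++ r₂ ∧ r' = r₁' ++ b.path ++ r₂' ∧
    b.lc = some cl ∧ b.rc = some cr ∧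
    r₁.getLast? = some cl.lo ∧ r₁'.getLast? = some cl.hi ∧
    r₂.head? = some cr.hi ∧ r₂'.head? = some cr.lo

/-- The brick `b` labels the covering relation `Δ ⋖ Δ'` of the framing lattice. -/
def IsLabel (Δ Δ' : Set (List Γ.E)) (b : Γ.GRoute) : Prop :=
  ∃ r r', Adjacent Δ Δ' r r' ∧ (∃ v, CwAt (routeG r) (routeG r') v) ∧ IsLabelData r r' b

/-- `b` labels a lower covering relation of `Δ`. -/
def IsDownLabel (Δ : Set (List Γ.E)) (b : Γ.GRoute) : Prop := ∃ Δ', IsLabel Δ' Δ b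

/-- A brick clique: a (possibly empty) set of pairwise coherent bricks. -/
def IsBrickClique (T : Set Γ.GRoute) : Prop :=
  (∀ b ∈ T, IsBrick b) ∧ ∀ b ∈ T, ∀ b' ∈ T, b ≠ b' → Coherent b b'

/-- A join-irreducible element of the framing lattice: a maximal clique with a unique
lower cover. -/
def JoinIrr (Δ : Set (List Γ.E)) : Prop := IsMaxClique Δ ∧ ∃! Δ', Rotation Δ' Δ

end GDefs

end FramedGraph

open FramedGraph

/-- The oruga graph of size `n`: vertices `0, …, n` and two parallel edges between `i-1`
and `i` for all `i`, with the standard framing (the lower edge, labelled `false`, is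
smaller than the upper edge, labelled `true`, and the outgoing order at `i` matches the
incoming order at `i+1`). -/
def oruga (n : ℕ) : FramedGraph where
  V := n + 1
  E := Fin n × Bool
  fintypeE := inferInstance
  decEqE := inferInstance
  src e := e.1
  tgt e := e.1 + 1
  src_lt_tgt e := Nat.lt_succ_self _
  tgt_lt_V e := Nat.succ_lt_succ e.1.isLt
  inOrd e := if e.2 then 1 else 0
  outOrd e := if e.2 then 1 else 0
  inOrd_inj := by
    rintro ⟨i, b⟩ ⟨j, c⟩ h1 h2
    simp only [Prod.mk.injEq]
    refine ⟨Fin.ext (Nat.succ_injective h1), ?_⟩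
    cases b <;> cases c <;> simp_all
  outOrd_inj := by
    rintro ⟨i, b⟩ ⟨j, c⟩ h1 h2
    simp only [Prod.mk.injEq]
    exact ⟨Fin.ext h1, by cases b <;> cases c <;> simp_all⟩

/-- The route of the oruga graph corresponding to a binary word (`false` = lower edge
`0`, `true` = upper edge `1`). -/
def toRoute {n : ℕ} (w : Fin n → Bool) : List (oruga n).E :=
  (List.finRange n).map fun i => ((i, w i) : (oruga n).E)

/-- An arc on `[n]` in the sense of Reading: it starts at `a`, ends at `b > a`, and
passes above exactly the integers of `S ⊆ (a, b)`. -/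
structure Arc (n : ℕ) where
  a : ℕ
  b : ℕ
  S : Set ℕ
  one_le_a : 1 ≤ a
  a_lt_b : a < b
  b_le_n : b ≤ n
  S_mem : ∀ k ∈ S, a < k ∧ k < b

/-- The level of an arc at an integer of its closed span: `1/2` at its endpoints, `1`
above the integers it passes above, `0` below the others. -/
noncomputable def Arc.level {n : ℕ} (α : Arc n) (k : ℕ) : ℚ :=
  if k = α.a ∨ k = α.b then 1 / 2 else if k ∈ α.S then 1 else 0

/-- Two arcs form a noncrossing arc diagram: they share no left endpoint, no right
endpoint, and their levels never flip on the common span (no crossing). -/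
noncomputable def Noncrossing {n : ℕ} (α β : Arc n) : Prop :=
  α.a ≠ β.a ∧ α.b ≠ β.b ∧
  ¬∃ u v : ℕ, max α.a β.a ≤ u ∧ u ≤ v ∧ v ≤ min α.b β.b ∧
    ((α.level u < β.level u ∧ β.level v < α.level v) ∨
      (β.level u < α.level u ∧ α.level v < β.level v))

/-- The arc `α` corresponds to the brick `g` of the oruga graph: left corner at vertex
`α.a`, right corner at vertex `α.b − 1`, and the path uses the top edge between `k − 1`
and `k` iff `α` passes above `k`. -/
def ArcCorresponds {n : ℕ} (α : Arc n) (g : FramedGraph.GRoute (oruga n)) : Prop :=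
  (∃ cl, g.lc = some cl ∧ cl.v = α.a) ∧
  (∃ cr, g.rc = some cr ∧ cr.v = α.b - 1) ∧
  g.path.length = α.b - 1 - α.a ∧
  ∀ (t : ℕ) (ht : t < g.path.length),
    (((g.path.get ⟨t, ht⟩ : Fin n × Bool)).1 : ℕ) = α.a + t ∧
    (((g.path.get ⟨t, ht⟩ : Fin n × Bool)).2 = true ↔ (α.a + t + 1) ∈ α.S)

/-!
In the oruga graph every internal vertex carries exactly one left and one right corner, so a
brick is determined by the vertices of its corners and the top/bottom choice of each of its
edges: exactly the data of an arc.

At a vertex `w` of their common span, the incoming key list of the brick of `α` is the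
sequence of levels of `α` read from `w` leftwards, and its outgoing key list the levels read
from `w + 1` rightwards; both end with the corner key `1/2`, the level of `α` at its endpoint.
So the brick of `α` is clockwise to that of `β` at `w` iff, at the nearest places on either
side of `w` where the levels differ, `α` is below `β` on the left and above it on the right.
Such a `w` exists iff `α` crosses `β` from below.
-/

lemma List.map_range_lt_map_range_iff {α : Type*} [LT α] (F G : ℕ → α) (m m' : ℕ) :
    (range m).map F < (range m').map G ↔
      (∃ j < m, j < m' ∧ F j < G j ∧ ∀ i < j, F i = G i) ∨ (m < m' ∧ ∀ i < m, F i = G i) := by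
  rw [List.lt_iff_exists]
  simp only [length_map, length_range, getElem_map, getElem_range]
  constructor
  · rintro (⟨h, hm⟩ | ⟨j, hj, hj', heq, hlt⟩)
    · refine Or.inr ⟨hm, fun i hi => ?_⟩
      have := congrArg (·[i]?) h
      simpa [hi, hm.trans' hi] using this
    · exact Or.inl ⟨j, hj, hj', hlt, fun i hi => heq i hi⟩
  · rintro (⟨j, hj, hj', hlt, heq⟩ | ⟨hm, heq⟩)
    · exact Or.inr ⟨j, hj, hj', fun i hi => heq i hi, hlt⟩
    · refine Or.inl ⟨ext_getElem (by simp; omega) fun i h₁ h₂ => ?_, hm⟩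
      simp only [length_map, length_range] at h₁
      simp [heq i h₁]

lemma List.filter_ofFn_eq_take {γ : Type*} {L : ℕ} (f : Fin L → γ) (p : γ → Bool) (m : ℕ)
    (hp : ∀ i : Fin L, p (f i) ↔ (i : ℕ) < m) : (ofFn f).filter p = (ofFn f).take m := by
  induction L generalizing m with
  | zero => simp
  | succ L ih =>
    cases m with
    | zero => simp_all [filter_eq_nil_iff, mem_ofFn]
    | succ m =>
      rw [ofFn_succ, take_succ_cons, filter_cons_of_pos (by simp [hp])]
      exact congrArg _ (ih _ m fun i => by simpa using hp i.succ)

lemma List.filter_ofFn_eq_drop {γ : Type*} {L : ℕ} (f : Fin L → γ) (p : γ → Bool) (m : ℕ)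
    (hp : ∀ i : Fin L, p (f i) ↔ m ≤ (i : ℕ)) : (ofFn f).filter p = (ofFn f).drop m := by
  induction L generalizing m with
  | zero => simp
  | succ L ih =>
    cases m with
    | zero => simp_all [filter_eq_self, mem_ofFn]
    | succ m =>
      rw [ofFn_succ, drop_succ_cons, filter_cons_of_neg (by simp [hp])]
      exact ih _ m fun i => by simpa using hp i.succ

namespace Oruga

variable {n : ℕ}

@[simp] lemma src_eq (e : (oruga n).E) : (oruga n).src e = e.1 := rfl
@[simp] lemma tgt_eq (e : (oruga n).E) : (oruga n).tgt e = e.1 + 1 := rfl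
@[simp] lemma inOrd_eq (e : (oruga n).E) : (oruga n).inOrd e = if e.2 then 1 else 0 := rfl

lemma snd_eq_of_key_lt {e f : (oruga n).E}
    (h : (if e.2 then (1 : ℚ) else 0) < if f.2 then 1 else 0) : e.2 = false ∧ f.2 = true := by
  revert h; cases e.2 <;> cases f.2 <;> norm_num

lemma leftCorner_eq_of_v {c c' : (oruga n).LeftCorner} (h : c.v = c'.v) : c = c' := by
  have hlo : c.lo = c'.lo :=
    Prod.ext (Fin.ext <| by have := c.tgt_lo; have := c'.tgt_lo; simp_all; omega)
      ((snd_eq_of_key_lt c.lo_lt_hi).1.trans (snd_eq_of_key_lt c'.lo_lt_hi).1.symm)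
  have hhi : c.hi = c'.hi :=
    Prod.ext (Fin.ext <| by have := c.tgt_hi; have := c'.tgt_hi; simp_all; omega)
      ((snd_eq_of_key_lt c.lo_lt_hi).2.trans (snd_eq_of_key_lt c'.lo_lt_hi).2.symm)
  cases c; cases c'; simp_all

lemma rightCorner_eq_of_v {c c' : (oruga n).RightCorner} (h : c.v = c'.v) : c = c' := by
  have hlo : c.lo = c'.lo :=
    Prod.ext (Fin.ext <| by have := c.src_lo; have := c'.src_lo; simp_all)
      ((snd_eq_of_key_lt c.lo_lt_hi).1.trans (snd_eq_of_key_lt c'.lo_lt_hi).1.symm)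
  have hhi : c.hi = c'.hi :=
    Prod.ext (Fin.ext <| by have := c.src_hi; have := c'.src_hi; simp_all)
      ((snd_eq_of_key_lt c.lo_lt_hi).2.trans (snd_eq_of_key_lt c'.lo_lt_hi).2.symm)
  cases c; cases c'; simp_all

def leftCorner (v : ℕ) (h₁ : 1 ≤ v) (h₂ : v < n) : (oruga n).LeftCorner where
  v := v
  lo := (⟨v - 1, by omega⟩, false)
  hi := (⟨v - 1, by omega⟩, true)
  tgt_lo := show v - 1 + 1 = v by omega
  tgt_hi := show v - 1 + 1 = v by omega
  lo_lt_hi := show (0 : ℚ) < 1 by norm_num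
  consec := by
    rintro ⟨i, _ | _⟩ - ⟨h, h'⟩
    exacts [lt_irrefl (0 : ℚ) h, lt_irrefl (1 : ℚ) h']
  internal := ⟨(⟨v, h₂⟩, false), rfl⟩

def rightCorner (v : ℕ) (h₁ : 1 ≤ v) (h₂ : v < n) : (oruga n).RightCorner where
  v := v
  lo := (⟨v, h₂⟩, false)
  hi := (⟨v, h₂⟩, true)
  src_lo := rfl
  src_hi := rfl
  lo_lt_hi := show (0 : ℚ) < 1 by norm_num
  consec := by
    rintro ⟨i, _ | _⟩ - ⟨h, h'⟩
    exacts [lt_irrefl (0 : ℚ) h, lt_irrefl (1 : ℚ) h']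
  internal := ⟨(⟨v - 1, by omega⟩, false), show v - 1 + 1 = v by omega⟩

@[simp] lemma leftCorner_key (v : ℕ) (h₁ : 1 ≤ v) (h₂ : v < n) :
    (leftCorner v h₁ h₂).key = 1 / 2 := by
  show ((0 : ℚ) + 1) / 2 = 1 / 2; norm_num

@[simp] lemma rightCorner_key (v : ℕ) (h₁ : 1 ≤ v) (h₂ : v < n) :
    (rightCorner v h₁ h₂).key = 1 / 2 := by
  show ((0 : ℚ) + 1) / 2 = 1 / 2; norm_num

lemma leftCorner_inj {v v' : ℕ} {h₁ : 1 ≤ v} {h₂ : v < n} {h₁' : 1 ≤ v'} {h₂' : v' < n} :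
    leftCorner v h₁ h₂ = leftCorner v' h₁' h₂' ↔ v = v' :=
  ⟨congrArg LeftCorner.v, by rintro rfl; rfl⟩

lemma rightCorner_inj {v v' : ℕ} {h₁ : 1 ≤ v} {h₂ : v < n} {h₁' : 1 ≤ v'} {h₂' : v' < n} :
    rightCorner v h₁ h₂ = rightCorner v' h₁' h₂' ↔ v = v' :=
  ⟨congrArg RightCorner.v, by rintro rfl; rfl⟩

lemma getElem_fst_of_isPath {p : List (oruga n).E} (hp : (oruga n).IsPath p) {v : ℕ}
    (hhead : ∀ e, p.head? = some e → (oruga n).src e = v) (t : ℕ) (ht : t < p.length) :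
    (p[t].1 : ℕ) = v + t := by
  induction t with
  | zero => exact hhead _ (by simp [head?_eq_getElem?, getElem?_eq_getElem ht])
  | succ t ih =>
    have hstep := (isChain_iff_getElem.mp hp) t ht
    simp only [tgt_eq, src_eq] at hstep
    rw [← hstep, ih (by omega)]
    omega

end Oruga

namespace Arc

variable {n : ℕ}

section

variable (α : Arc n)

lemma a_lt_n : α.a < n := by have := α.a_lt_b; have := α.b_le_n; omega

lemma one_le_b_sub_one : 1 ≤ α.b - 1 := by have := α.a_lt_b; have := α.one_le_a; omega

lemma b_sub_one_lt_n : α.b - 1 < n := by have := α.a_lt_b; have := α.b_le_n; omega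

noncomputable def path : List (oruga n).E :=
  List.ofFn (n := α.b - 1 - α.a) fun t =>
    (⟨α.a + t, by have := α.b_sub_one_lt_n; omega⟩, decide (α.a + t + 1 ∈ α.S))

noncomputable def brick : (oruga n).GRoute :=
  ⟨some (Oruga.leftCorner α.a α.one_le_a α.a_lt_n),
    some (Oruga.rightCorner (α.b - 1) α.one_le_b_sub_one α.b_sub_one_lt_n), α.path⟩

@[simp] lemma length_path : α.path.length = α.b - 1 - α.a := List.length_ofFn

lemma getElem_path (t : ℕ) (ht : t < α.path.length) :
    α.path[t] = (⟨α.a + t, by have := α.b_sub_one_lt_n; rw [length_path] at ht; omega⟩,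
      decide (α.a + t + 1 ∈ α.S)) :=
  List.getElem_ofFn _

@[simp] lemma getElem_path_fst (t : ℕ) (ht : t < α.path.length) :
    (α.path[t].1 : ℕ) = α.a + t := by
  rw [getElem_path]

@[simp] lemma getElem_path_snd (t : ℕ) (ht : t < α.path.length) :
    α.path[t].2 = decide (α.a + t + 1 ∈ α.S) := by
  rw [getElem_path]

lemma corresponds_brick : ArcCorresponds α α.brick :=
  ⟨⟨_, rfl, rfl⟩, ⟨_, rfl, rfl⟩, α.length_path, fun t ht => by simp [brick]⟩

lemma isBrick_brick : IsBrick α.brick := by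
  have := α.a_lt_b
  refine ⟨⟨?_, ?_, ?_, ?_⟩, rfl, rfl⟩
  · refine isChain_iff_getElem.mpr fun t ht => ?_
    simp only [brick, Oruga.src_eq, Oruga.tgt_eq, getElem_path_fst]
    omega
  · intro e he
    obtain ⟨h0, rfl⟩ := List.getElem?_eq_some_iff.mp (head?_eq_getElem? ▸ he)
    simp [brick, Oruga.leftCorner]
  · intro e he
    obtain ⟨h0, rfl⟩ := List.getElem?_eq_some_iff.mp (getLast?_eq_getElem? ▸ he)
    simp only [brick, length_path] at h0 ⊢
    simp only [Oruga.tgt_eq, getElem_path_fst, Oruga.rightCorner]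
    omega
  · intro hp
    have : α.b - 1 - α.a = 0 := by simpa [brick] using congrArg List.length hp
    exact ⟨_, _, rfl, rfl, show α.a = α.b - 1 by omega⟩

@[simp] lemma level_a : α.level α.a = 1 / 2 := if_pos (Or.inl rfl)

@[simp] lemma level_b : α.level α.b = 1 / 2 := if_pos (Or.inr rfl)

lemma level_of_lt_of_lt {k : ℕ} (h₁ : α.a < k) (h₂ : k < α.b) :
    α.level k = if k ∈ α.S then 1 else 0 :=
  if_neg (by omega)

lemma level_ne_half {k : ℕ} (h₁ : α.a < k) (h₂ : k < α.b) : α.level k ≠ 1 / 2 := by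
  rw [level_of_lt_of_lt α h₁ h₂]
  split_ifs <;> norm_num

lemma inOrd_getElem_path (t : ℕ) (ht : t < α.path.length) :
    (oruga n).inOrd α.path[t] = α.level (α.a + t + 1) := by
  simp only [length_path] at ht
  simp [level_of_lt_of_lt α (k := α.a + t + 1) (by omega) (by omega)]

lemma inKeys_brick {w : ℕ} (hw₁ : α.a ≤ w) (hw₂ : w ≤ α.b - 1) :
    α.brick.inKeys w = (range (w - α.a + 1)).map fun j => α.level (w - j) := by
  have := α.a_lt_b
  have hfilter : α.path.filter (fun e => (oruga n).tgt e ≤ w) = α.path.take (w - α.a) :=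
    List.filter_ofFn_eq_take _ _ _ fun i => by
      simp only [decide_eq_true_eq]; show α.a + i + 1 ≤ w ↔ _; omega
  have hlen : (α.path.take (w - α.a)).length = w - α.a := by
    rw [length_take, length_path]; omega
  rw [GRoute.inKeys, brick, range_succ, map_append]
  simp only [hfilter, Option.elim, Oruga.leftCorner_key]
  congr 1
  · refine ext_getElem (by rw [length_map, length_reverse, hlen, length_map, length_range])
      fun i h₁ h₂ => ?_
    simp only [length_map, length_reverse, hlen] at h₁
    rw [getElem_map, getElem_reverse, getElem_take, inOrd_getElem_path, getElem_map,
      getElem_range, hlen]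
    congr 1
    omega
  · simp [show w - (w - α.a) = α.a by omega]

lemma outKeys_brick {w : ℕ} (hw₁ : α.a ≤ w) (hw₂ : w ≤ α.b - 1) :
    α.brick.outKeys w = (range (α.b - w)).map fun j => α.level (w + 1 + j) := by
  have := α.a_lt_b
  have hfilter : α.path.filter (fun e => w ≤ (oruga n).src e) = α.path.drop (w - α.a) :=
    List.filter_ofFn_eq_drop _ _ _ fun i => by
      simp only [decide_eq_true_eq]; show w ≤ α.a + i ↔ _; omega
  have hlen : (α.path.drop (w - α.a)).length = α.b - 1 - w := by
    rw [length_drop, length_path]; omega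
  rw [GRoute.outKeys, brick, show α.b - w = α.b - 1 - w + 1 by omega,
    range_succ, map_append]
  simp only [hfilter, Option.elim, Oruga.rightCorner_key]
  congr 1
  · refine ext_getElem (by rw [length_map, hlen, length_map, length_range])
      fun i h₁ h₂ => ?_
    simp only [length_map, hlen] at h₁
    rw [getElem_map, getElem_drop]
    exact (inOrd_getElem_path α _ _).trans (by rw [getElem_map, getElem_range]; congr 1; omega)
  · simp [show w + 1 + (α.b - 1 - w) = α.b by omega]

lemma passes_brick_iff {w : ℕ} : α.brick.passes w ↔ α.a ≤ w ∧ w ≤ α.b - 1 := by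
  have := α.a_lt_b
  constructor
  · rintro (⟨e, he, hw⟩ | ⟨c, hc, rfl⟩ | ⟨c, hc, rfl⟩)
    · obtain ⟨t, ht, rfl⟩ := List.getElem_of_mem he
      have : t < α.b - 1 - α.a := by simpa [brick] using ht
      simp only [brick, Oruga.src_eq, Oruga.tgt_eq, getElem_path_fst] at hw
      omega
    · cases hc
      exact ⟨le_rfl, show α.a ≤ α.b - 1 by omega⟩
    · cases hc
      exact ⟨show α.a ≤ α.b - 1 by omega, le_rfl⟩
  · rintro ⟨h₁, h₂⟩
    rcases h₁.eq_or_lt with rfl | h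
    · exact Or.inr (Or.inl ⟨_, rfl, rfl⟩)
    · refine Or.inl ⟨α.path[w - α.a - 1]'(by rw [length_path]; omega), getElem_mem _, Or.inr ?_⟩
      simp only [Oruga.tgt_eq, getElem_path_fst]
      omega

end

def LowerAtLeft (α β : Arc n) (w : ℕ) : Prop :=
  ∃ u, max α.a β.a ≤ u ∧ u ≤ w ∧ α.level u < β.level u ∧
    ∀ k, u < k → k ≤ w → α.level k = β.level k

def LowerAtRight (α β : Arc n) (w : ℕ) : Prop :=
  ∃ v, w < v ∧ v ≤ min α.b β.b ∧ α.level v < β.level v ∧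
    ∀ k, w < k → k < v → α.level k = β.level k

def CrossesFromBelow (α β : Arc n) : Prop :=
  ∃ u v, max α.a β.a ≤ u ∧ u ≤ v ∧ v ≤ min α.b β.b ∧
    α.level u < β.level u ∧ β.level v < α.level v

variable {α β : Arc n} {g : (oruga n).GRoute} {w : ℕ}

lemma eq_brick_of_corresponds (h : ArcCorresponds α g) : g = α.brick := by
  obtain ⟨lc, rc, path⟩ := g
  obtain ⟨⟨cl, rfl, hcl⟩, ⟨cr, rfl, hcr⟩, hlen, hget⟩ := h
  have hpath : path = α.path := by
    refine List.ext_getElem (by simp [hlen]) fun t h₁ h₂ => ?_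
    obtain ⟨hfst, hsnd⟩ := hget t h₁
    simp only [List.get_eq_getElem] at hfst hsnd
    exact Prod.ext (Fin.ext (by simpa using hfst)) (Bool.eq_iff_iff.mpr (by simpa using hsnd))
  obtain rfl := Oruga.leftCorner_eq_of_v (c' := Oruga.leftCorner _ α.one_le_a α.a_lt_n) hcl
  obtain rfl :=
    Oruga.rightCorner_eq_of_v (c' := Oruga.rightCorner _ α.one_le_b_sub_one α.b_sub_one_lt_n) hcr
  rw [hpath]
  rfl

lemma exists_corresponds_of_isBrick (hg : IsBrick g) :
    ∃ α : Arc n, ArcCorresponds α g := by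
  obtain ⟨lc, rc, p⟩ := g
  obtain ⟨⟨hpath, hhead, hlast, hempty⟩, hlc, hrc⟩ := hg
  obtain ⟨cl, rfl⟩ := Option.isSome_iff_exists.mp hlc
  obtain ⟨cr, rfl⟩ := Option.isSome_iff_exists.mp hrc
  have hfst := Oruga.getElem_fst_of_isPath hpath hhead
  have hcl : 1 ≤ cl.v := by have := cl.tgt_lo; simp only [Oruga.tgt_eq] at this; omega
  have hcr : cr.v < n := by have := cr.src_lo; simp only [Oruga.src_eq] at this; omega
  have hlen : cr.v = cl.v + p.length := by
    rcases p.eq_nil_or_concat' with rfl | ⟨q, e, rfl⟩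
    · obtain ⟨_, _, ⟨⟩, ⟨⟩, h⟩ := hempty rfl
      simpa using h.symm
    · have hlast := hlast e (getLast?_concat ..)
      have hfst := hfst q.length (by simp)
      simp only [Oruga.tgt_eq, getElem_concat_length] at hlast hfst
      rw [length_append, length_singleton]
      omega
  refine ⟨⟨cl.v, cr.v + 1, {k | ∃ t, ∃ ht : t < p.length, k = cl.v + t + 1 ∧ p[t].2},
    hcl, by omega, by omega, ?_⟩, ⟨cl, rfl, rfl⟩, ⟨cr, rfl, rfl⟩,
    show p.length = cr.v + 1 - 1 - cl.v by omega, ?_⟩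
  · rintro k ⟨t, ht, rfl, -⟩
    omega
  · intro t ht
    dsimp only
    refine ⟨hfst t ht, ⟨fun h => ⟨t, ht, rfl, h⟩, ?_⟩⟩
    rintro ⟨t', ht', heq, h⟩
    obtain rfl : t = t' := by omega
    exact h

lemma eq_of_corresponds (hα : ArcCorresponds α g) (hβ : ArcCorresponds β g) : α = β := by
  obtain ⟨⟨cl, hcl, hα_a⟩, ⟨cr, hcr, hα_b⟩, hlen, hα_get⟩ := hα
  obtain ⟨⟨_, hcl', hβ_a⟩, ⟨_, hcr', hβ_b⟩, -, hβ_get⟩ := hβ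
  cases hcl.symm.trans hcl'
  cases hcr.symm.trans hcr'
  have := α.a_lt_b
  have := β.a_lt_b
  have hS : ∀ k, k ∈ α.S ↔ k ∈ β.S := by
    intro k
    by_cases hk : α.a < k ∧ k < α.b
    · have ht : k - α.a - 1 < g.path.length := by omega
      have := (hα_get _ ht).2.symm.trans (hβ_get _ ht).2
      rwa [show α.a + (k - α.a - 1) + 1 = k by omega,
        show β.a + (k - α.a - 1) + 1 = k by omega] at this
    · have := β.S_mem k
      exact iff_of_false (fun h => hk (α.S_mem k h)) (fun h => hk (by have := this h; omega))
  obtain ⟨a, b, S, _⟩ := α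
  obtain ⟨a', b', S', _⟩ := β
  obtain rfl : a = a' := hα_a.symm.trans hβ_a
  obtain rfl : b = b' := by dsimp only at *; omega
  obtain rfl : S = S' := Set.ext hS
  rfl

/- A strict prefix is impossible in either comparison: the shorter key list ends with an
endpoint level `1/2`, where the longer one has an interior level `0` or `1`. -/
lemma inKeys_brick_lt_iff (hα : α.a ≤ w ∧ w ≤ α.b - 1) (hβ : β.a ≤ w ∧ w ≤ β.b - 1) :
    lexLt (α.brick.inKeys w) (β.brick.inKeys w) ↔ LowerAtLeft α β w := by
  have := α.a_lt_b
  have := β.a_lt_b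
  rw [lexLt, lex_lt, inKeys_brick α hα.1 hα.2, inKeys_brick β hβ.1 hβ.2,
    List.map_range_lt_map_range_iff]
  constructor
  · rintro (⟨j, hj, hj', hlt, heq⟩ | ⟨hlt, heq⟩)
    · refine ⟨w - j, by omega, by omega, hlt, fun k hk hkw => ?_⟩
      simpa [show w - (w - k) = k by omega] using heq (w - k) (by omega)
    · have := heq (w - α.a) (by omega)
      rw [show w - (w - α.a) = α.a by omega, level_a] at this
      exact absurd this.symm (β.level_ne_half (by omega) (by omega))
  · rintro ⟨u, hu, huw, hlt, heq⟩
    refine Or.inl ⟨w - u, by omega, by omega, by rwa [show w - (w - u) = u by omega], ?_⟩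
    exact fun i hi => heq (w - i) (by omega) (by omega)

lemma outKeys_brick_lt_iff (hα : α.a ≤ w ∧ w ≤ α.b - 1) (hβ : β.a ≤ w ∧ w ≤ β.b - 1) :
    lexLt (α.brick.outKeys w) (β.brick.outKeys w) ↔ LowerAtRight α β w := by
  have := α.a_lt_b
  have := β.a_lt_b
  rw [lexLt, lex_lt, outKeys_brick α hα.1 hα.2, outKeys_brick β hβ.1 hβ.2,
    List.map_range_lt_map_range_iff]
  constructor
  · rintro (⟨j, hj, hj', hlt, heq⟩ | ⟨hlt, heq⟩)
    · refine ⟨w + 1 + j, by omega, by omega, hlt, fun k hk hkv => ?_⟩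
      simpa [show w + 1 + (k - (w + 1)) = k by omega] using heq (k - (w + 1)) (by omega)
    · have := heq (α.b - 1 - w) (by omega)
      rw [show w + 1 + (α.b - 1 - w) = α.b by omega, level_b] at this
      exact absurd this.symm (β.level_ne_half (by omega) (by omega))
  · rintro ⟨v, hwv, hv, hlt, heq⟩
    refine Or.inl ⟨v - (w + 1), by omega, by omega,
      by rwa [show w + 1 + (v - (w + 1)) = v by omega], ?_⟩
    exact fun i hi => heq (w + 1 + i) (by omega) (by omega)

lemma cwAt_brick_iff : CwAt α.brick β.brick w ↔
    (α.a ≤ w ∧ w ≤ α.b - 1) ∧ (β.a ≤ w ∧ w ≤ β.b - 1) ∧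
      LowerAtLeft α β w ∧ LowerAtRight β α w := by
  rw [CwAt, passes_brick_iff, passes_brick_iff]
  exact and_congr_right fun hα => and_congr_right fun hβ =>
    and_congr (inKeys_brick_lt_iff hα hβ) (outKeys_brick_lt_iff hβ hα)

/- Take `u` to be the last point before `v` where `α` is below `β`, and `v` the first point
after it where the levels differ; the brick of `α` is clockwise to that of `β` at `v - 1`. -/
lemma exists_cwAt_brick_iff : (∃ w, CwAt α.brick β.brick w) ↔ CrossesFromBelow α β := by
  have := α.a_lt_b
  have := β.a_lt_b
  constructor
  · rintro ⟨w, hw⟩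
    obtain ⟨hα, hβ, ⟨u, hu, huw, hlt, -⟩, ⟨v, hwv, hv, hgt, -⟩⟩ := cwAt_brick_iff.mp hw
    exact ⟨u, v, hu, by omega, by omega, hlt, hgt⟩
  rintro ⟨u, v, hu, huv, hv, hlt, hgt⟩
  obtain ⟨u', hu'u, hu'v, hu', hu'max⟩ : ∃ u', u ≤ u' ∧ u' ≤ v ∧ α.level u' < β.level u' ∧
      ∀ k, u' < k → k ≤ v → ¬α.level k < β.level k :=
    ⟨_, Nat.le_findGreatest huv hlt, Nat.findGreatest_le v,
      Nat.findGreatest_spec (P := fun k => α.level k < β.level k) huv hlt,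
      fun k hk hkv => Nat.findGreatest_is_greatest hk hkv⟩
  have hu'v : u' < v := hu'v.lt_of_ne (by rintro rfl; exact lt_asymm hgt hu')
  have hex : ∃ k, u' < k ∧ α.level k ≠ β.level k := ⟨v, hu'v, hgt.ne'⟩
  obtain ⟨hu'v', hne⟩ := Nat.find_spec hex
  have hv'v : Nat.find hex ≤ v := Nat.find_min' hex ⟨hu'v, hgt.ne'⟩
  have hv' := (not_lt.mp (hu'max _ hu'v' hv'v)).lt_of_ne hne.symm
  have heq : ∀ k, u' < k → k < Nat.find hex → α.level k = β.level k := fun k hk hkv =>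
    not_not.mp fun h => Nat.find_min hex hkv ⟨hk, h⟩
  refine ⟨Nat.find hex - 1, cwAt_brick_iff.mpr ⟨⟨by omega, by omega⟩, ⟨by omega, by omega⟩,
    ⟨u', by omega, by omega, hu', fun k hk hkw => heq k hk (by omega)⟩,
    ⟨_, by omega, by omega, hv', fun k hk hkv => by omega⟩⟩⟩

lemma weakCoherent_brick_iff :
    WeakCoherent α.brick β.brick ↔ ¬(CrossesFromBelow α β ∨ CrossesFromBelow β α) := by
  rw [← exists_cwAt_brick_iff, ← exists_cwAt_brick_iff, not_or, not_exists, not_exists,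
    ← forall_and, WeakCoherent]

lemma noncrossing_iff : Noncrossing α β ↔
    α.a ≠ β.a ∧ α.b ≠ β.b ∧ ¬(CrossesFromBelow α β ∨ CrossesFromBelow β α) := by
  simp only [Noncrossing, CrossesFromBelow, max_comm β.a, min_comm β.b, ← exists_or,
    and_or_left]

lemma brick_lc_ne_iff : (∀ c, α.brick.lc = some c → β.brick.lc ≠ some c) ↔ α.a ≠ β.a := by
  simp [brick, Oruga.leftCorner_inj, eq_comm]

lemma brick_rc_ne_iff : (∀ c, α.brick.rc = some c → β.brick.rc ≠ some c) ↔ α.b ≠ β.b := by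
  have := α.a_lt_b
  have := β.a_lt_b
  simp only [brick, eq_comm, Option.some.injEq, ne_eq, forall_eq, Oruga.rightCorner_inj]
  omega

lemma noncrossing_iff_coherent_brick : Noncrossing α β ↔ Coherent α.brick β.brick := by
  rw [noncrossing_iff, Coherent, weakCoherent_brick_iff, brick_lc_ne_iff, brick_rc_ne_iff]
  exact and_rotate.symm

end Arc

/-- The map `α ↦ s̄_α` is a bijection between arcs on `[n]` and bricks
of the oruga graph of size `n`, and two arcs form a noncrossing arc diagram iff the
corresponding bricks are coherent. -/
theorem arcs_bricks_bijection (n : ℕ) :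
    (∀ α : Arc n, ∃! g : FramedGraph.GRoute (oruga n),
      IsBrick g ∧ ArcCorresponds α g) ∧
    (∀ g : FramedGraph.GRoute (oruga n), IsBrick g → ∃! α : Arc n, ArcCorresponds α g) ∧
    ∀ (α β : Arc n) (g h : FramedGraph.GRoute (oruga n)),
      ArcCorresponds α g → ArcCorresponds β h →
      (Noncrossing α β ↔ Coherent g h) := by
  refine ⟨fun α => ⟨α.brick, ⟨α.isBrick_brick, α.corresponds_brick⟩,
      fun g hg => Arc.eq_brick_of_corresponds hg.2⟩, fun g hg => ?_, ?_⟩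
  · obtain ⟨α, hα⟩ := Arc.exists_corresponds_of_isBrick hg
    exact ⟨α, hα, fun β hβ => Arc.eq_of_corresponds hβ hα⟩
  · rintro α β g h hg hh
    rw [Arc.eq_brick_of_corresponds hg, Arc.eq_brick_of_corresponds hh]
    exact Arc.noncrossing_iff_coherent_brick
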